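/- Maj and Eag are incomparable under relative worst order analysis: Maj_W(E_n) ≥ (n/2 − 3 + 8/n)·Eag_W(E_n), while Eag_W(W_n) ≥ (n/4)·Maj_W(W_n), where W'_n = a_1,...,a_{⌈n/2⌉}, a_0,...,a_0 (⌊n/2⌋ copies of a_0) is a worst ordering for Eag of the content of W_n. -/

import Mathlib

open scoped BigOperators

noncomputable section

/-- frequency of item `a` in sequence `I` -/
def freq (I : List ℕ) (a : ℕ) : ℝ := (I.count a : ℝ) / (I.length : ℝ)

/-- profit (aggregate frequency) of buffer sequence `S` against input `I` -/
def profit (I S : List ℕ) : ℝ := (S.map (freq I)).sum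

/-- Naive algorithm: buffers every arriving item. -/
def naiP (I : List ℕ) : ℝ := profit I I

/-- Buffers of the eager algorithm: buffer each arriving item until the first
repeated item (two equal consecutive items), then keep it forever. -/
def eagRun : List ℕ → List ℕ
  | [] => []
  | [x] => [x]
  | x :: y :: rest =>
      if x = y then x :: List.replicate (rest.length + 1) x
      else x :: eagRun (y :: rest)

def eagP (I : List ℕ) : ℝ := profit I (eagRun I)

/-- One step of the Majority algorithm on state (buffer, counter). -/
def majStep (s : ℕ × ℕ) (a : ℕ) : ℕ × ℕ :=
  if s.2 = 0 then (a, 1)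
  else if a = s.1 then (s.1, s.2 + 1)
  else (s.1, s.2 - 1)

def majBuffers (I : List ℕ) : List ℕ :=
  ((List.scanl majStep ((0 : ℕ), (0 : ℕ)) I).tail).map Prod.fst

def majP (I : List ℕ) : ℝ := profit I (majBuffers I)

/-- A valid offline buffer schedule: at each step the buffer holds either the
currently arriving item or the previously buffered item (the first buffered
item must be the first arriving item). -/
def ValidSched (I S : List ℕ) : Prop :=
  S.length = I.length ∧
    ∀ i, i < S.length →
      S.getD i 0 = I.getD i 0 ∨ (0 < i ∧ S.getD i 0 = S.getD (i - 1) 0)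

/-- Optimal offline profit. -/
def optP (I : List ℕ) : ℝ := sSup {x | ∃ S, ValidSched I S ∧ x = profit I S}

/-- Worst-permutation value of an algorithm's profit. -/
def worstP (f : List ℕ → ℝ) (I : List ℕ) : ℝ := sInf {x | ∃ J, J.Perm I ∧ x = f J}

/-- E_n = a,a,b,b,...,b with n-2 copies of b. -/
def Eseq (n a b : ℕ) : List ℕ := a :: a :: List.replicate (n - 2) b

/-- W_n = a_1,a_0,a_2,a_0,... with item 0 playing the role of a_0. -/
def Wseq (n : ℕ) : List ℕ :=
  ((List.range (n / 2)).flatMap fun i => [i + 1, 0]) ++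
    (if n % 2 = 1 then [n / 2 + 1] else [])

/-- W'_n = a_1,...,a_⌈n/2⌉,a_0,...,a_0 with ⌊n/2⌋ copies of a_0 = 0. -/
def Wseq' (n : ℕ) : List ℕ :=
  ((List.range ((n + 1) / 2)).map (· + 1)) ++ List.replicate (n / 2) 0

/-- I_n = ⌈n/2⌉ copies of a_0 = 0 followed by ⌊n/2⌋ distinct items. -/
def Iseq (n : ℕ) : List ℕ :=
  List.replicate ((n + 1) / 2) 0 ++ (List.range (n / 2)).map (· + 1)

/-- D(I): the items of `I` listed in nondecreasing order of frequency. -/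
def Dsort (I : List ℕ) : List ℕ :=
  List.insertionSort (fun x y => I.count x ≤ I.count y) I

/-- The interleaving permutation a'_1, a'_n, a'_2, a'_{n-1}, ... of a list. -/
def interleave : List ℕ → List ℕ
  | [] => []
  | x :: xs => x :: interleave xs.reverse
termination_by l => l.length
decreasing_by set_option linter.unnecessarySimpa false in simpa using Nat.lt_succ_self xs.length

/-- max over sequences of length n of f(I) - g(I). -/
def maxDiff (f g : List ℕ → ℝ) (n : ℕ) : ℝ :=
  sSup {d | ∃ I : List ℕ, I.length = n ∧ d = f I - g I}

/-- min over sequences of length n of f(I) - g(I). -/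
def minDiff (f g : List ℕ → ℝ) (n : ℕ) : ℝ :=
  sInf {d | ∃ I : List ℕ, I.length = n ∧ d = f I - g I}

/-- A deterministic online algorithm for the single-buffer frequent items
problem: the buffer after each nonempty prefix is either the arriving item or
the previous buffer content. -/
structure OnlineAlg where
  buf : List ℕ → ℕ
  first : ∀ x, buf [x] = x
  step : ∀ l x, l ≠ [] → buf (l ++ [x]) = x ∨ buf (l ++ [x]) = buf l

/-- Profit of an online algorithm on input `I`. -/
def oprofit (A : OnlineAlg) (I : List ℕ) : ℝ :=
  ∑ t ∈ Finset.range I.length, freq I (A.buf (I.take (t + 1)))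

end

/-! On `E_n`, Eag locks onto `a` after the first two items, so `Eag(E_n) = 2`. On any ordering of
`E_n`, Maj can buffer `a` only while its counter for `a` is positive, hence at most `2 · 2` times,
so it earns at least `n - 6 + 16/n`.

On `W_n` every `a_0` resets the counter of Maj to zero, so Maj never buffers `a_0` and earns `1`.
Eag keeps forever only an item occurring twice in a row; in an ordering of `W_n` that can only be
the most frequent item `a_0`, so Eag earns at least the profit of buffering every arriving item.
That profit does not depend on the ordering, and Eag attains it on `W'_n`, where it is at least
`n/4`. -/

open List

lemma freq_nonneg (I : List ℕ) (a : ℕ) : 0 ≤ freq I a := by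
  unfold freq
  positivity

lemma profit_nonneg (I S : List ℕ) : 0 ≤ profit I S :=
  List.sum_nonneg fun _ hx => by
    obtain ⟨v, -, rfl⟩ := List.mem_map.1 hx
    exact freq_nonneg I v

lemma eagP_nonneg (I : List ℕ) : 0 ≤ eagP I := profit_nonneg _ _

lemma majP_nonneg (I : List ℕ) : 0 ≤ majP I := profit_nonneg _ _

lemma profit_append (I S T : List ℕ) : profit I (S ++ T) = profit I S + profit I T := by
  rw [profit, profit, profit, map_append, sum_append]

lemma profit_eq_length_mul {I S : List ℕ} {c : ℝ} (h : ∀ v ∈ S, freq I v = c) :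
    profit I S = S.length * c := by
  rw [profit, map_congr_left h, map_const', sum_replicate, nsmul_eq_mul]

lemma freq_le_freq {I : List ℕ} {v w : ℕ} (h : I.count v ≤ I.count w) : freq I v ≤ freq I w :=
  div_le_div_of_nonneg_right (by exact_mod_cast h) (Nat.cast_nonneg _)

lemma freq_perm {I J : List ℕ} (h : J.Perm I) : freq J = freq I := by
  funext v
  rw [freq, freq, h.count_eq, h.length_eq]

lemma naiP_perm {I J : List ℕ} (h : J.Perm I) : naiP J = naiP I := by
  rw [naiP, naiP, profit, profit, freq_perm h, (h.map _).sum_eq]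

section Worst

variable {f : List ℕ → ℝ} {I J : List ℕ}

lemma worstP_le (hf : ∀ K, 0 ≤ f K) (hJ : J.Perm I) : worstP f I ≤ f J :=
  csInf_le ⟨0, by rintro x ⟨K, -, rfl⟩; exact hf K⟩ ⟨J, hJ, rfl⟩

lemma le_worstP {c : ℝ} (h : ∀ K, K.Perm I → c ≤ f K) : c ≤ worstP f I :=
  le_csInf ⟨f I, I, Perm.refl I, rfl⟩ (by rintro x ⟨K, hK, rfl⟩; exact h K hK)

lemma worstP_eq_of_forall_le (hf : ∀ K, 0 ≤ f K) (hJ : J.Perm I)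
    (h : ∀ K, K.Perm I → f J ≤ f K) : worstP f I = f J :=
  le_antisymm (worstP_le hf hJ) (le_worstP h)

end Worst

lemma eagRun_replicate (k x : ℕ) : eagRun (replicate k x) = replicate k x := by
  match k with
  | 0 => rfl
  | 1 => rfl
  | k + 2 => rw [replicate_succ, replicate_succ, eagRun, if_pos rfl, length_replicate]; rfl

lemma eagRun_cons_self (x : ℕ) (l : List ℕ) :
    eagRun (x :: x :: l) = replicate (l.length + 2) x := by
  rw [eagRun, if_pos rfl]
  rfl

lemma eagRun_cons_of_notMem {y : ℕ} {l : List ℕ} (h : y ∉ l) :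
    eagRun (y :: l) = y :: eagRun l := by
  match l, h with
  | [], _ => rfl
  | z :: rest, h => rw [eagRun, if_neg fun hyz => h (mem_cons.2 (.inl hyz))]

lemma eagRun_append_replicate {p : List ℕ} {x : ℕ} (k : ℕ) (h : (p ++ [x]).Nodup) :
    eagRun (p ++ replicate k x) = p ++ replicate k x := by
  induction p with
  | nil => exact eagRun_replicate k x
  | cons y p ih =>
    obtain ⟨hy, hp⟩ := nodup_cons.1 h
    have hy' : y ∉ p ++ replicate k x := fun hmem => by
      rcases mem_append.1 hmem with hyp | hyx
      · exact hy (mem_append_left _ hyp)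
      · exact hy (mem_append_right _ (mem_singleton.2 (eq_of_mem_replicate hyx)))
    rw [cons_append, eagRun_cons_of_notMem hy', ih hp]

lemma sum_map_le_sum_map_eagRun (g : ℕ → ℝ) :
    ∀ l : List ℕ, (∀ x, [x, x] <:+: l → ∀ z ∈ l, g z ≤ g x) →
      (l.map g).sum ≤ ((eagRun l).map g).sum
  | [], _ => le_rfl
  | [_], _ => le_rfl
  | x :: y :: rest, h => by
    by_cases hxy : x = y
    · subst hxy
      have hle : ∀ r ∈ rest.map g, r ≤ g x := by
        rintro r hr
        obtain ⟨z, hz, rfl⟩ := mem_map.1 hr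
        exact h x ⟨[], rest, rfl⟩ z (by simp [hz])
      have hrest := sum_le_card_nsmul (rest.map g) (g x) hle
      rw [eagRun_cons_self, map_replicate, sum_replicate]
      simp only [map_cons, sum_cons, length_map, nsmul_eq_mul] at hrest ⊢
      push_cast
      linarith
    · have ih := sum_map_le_sum_map_eagRun g (y :: rest) fun x' hx' z hz =>
        h x' (infix_cons hx') z (mem_cons_of_mem _ hz)
      rw [eagRun, if_neg hxy]
      simp only [map_cons, sum_cons] at ih ⊢
      linarith

lemma naiP_le_eagP {I : List ℕ} (h : ∀ x, [x, x] <:+: I → ∀ z ∈ I, I.count z ≤ I.count x) :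
    naiP I ≤ eagP I :=
  sum_map_le_sum_map_eagRun (freq I) I fun x hx z hz => freq_le_freq (h x hx z hz)

section Majority

def majRun (s : ℕ × ℕ) (l : List ℕ) : List ℕ :=
  ((scanl majStep s l).tail).map Prod.fst

variable {s : ℕ × ℕ} {x v : ℕ} {l : List ℕ}

lemma majRun_cons : majRun s (x :: l) = (majStep s x).1 :: majRun (majStep s x) l := by
  cases l <;> simp [majRun, scanl_cons]

lemma length_majRun : (majRun s l).length = l.length := by
  rw [majRun, length_map, length_tail, length_scanl, Nat.add_sub_cancel]

lemma majStep_fst_eq_or_eq (s : ℕ × ℕ) (x : ℕ) : (majStep s x).1 = x ∨ (majStep s x).1 = s.1 := by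
  unfold majStep
  split_ifs <;> simp

lemma mem_majRun (h : v ∈ majRun s l) : v ∈ l ∨ v = s.1 := by
  induction l generalizing s with
  | nil => simp [majRun] at h
  | cons x l ih =>
    have hstep : (majStep s x).1 ∈ x :: l ∨ (majStep s x).1 = s.1 := by
      rcases majStep_fst_eq_or_eq s x with hx | hs
      · exact .inl (by rw [hx]; exact mem_cons_self)
      · exact .inr hs
    rw [majRun_cons, mem_cons] at h
    rcases h with rfl | h
    · exact hstep
    · rcases ih h with h | rfl
      · exact .inl (mem_cons_of_mem _ h)
      · exact hstep

lemma mem_of_mem_majRun (hs : s.2 = 0) (h : v ∈ majRun s l) : v ∈ l := by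
  cases l with
  | nil => simp [majRun] at h
  | cons x l =>
    have hstep : majStep s x = (x, 1) := if_pos hs
    rw [majRun_cons, hstep, mem_cons] at h
    rcases h with rfl | h
    · exact mem_cons_self
    · rcases mem_majRun h with h | rfl
      · exact mem_cons_of_mem _ h
      · exact mem_cons_self

lemma mem_of_mem_majBuffers {I : List ℕ} (h : v ∈ majBuffers I) : v ∈ I :=
  mem_of_mem_majRun (s := (0, 0)) rfl h

lemma length_majBuffers (I : List ℕ) : (majBuffers I).length = I.length := length_majRun

/-- While `a` is buffered, every step is an arrival of `a` or decrements the counter, and the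
decrements are paid for by the initial counter and the arrivals of `a`. -/
lemma count_majRun_le (a : ℕ) :
    (majRun s l).count a ≤ 2 * l.count a + if s.1 = a then s.2 else 0 := by
  induction l generalizing s with
  | nil => simp [majRun]
  | cons x l ih =>
    rw [majRun_cons, count_cons, count_cons]
    have := @ih (majStep s x)
    clear ih
    unfold majStep at this ⊢
    split_ifs at this ⊢ <;> simp_all <;> omega

lemma count_majBuffers_le (a : ℕ) (I : List ℕ) : (majBuffers I).count a ≤ 2 * I.count a := by
  have h := count_majRun_le (s := (0, 0)) (l := I) a
  rwa [ite_self, add_zero] at h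

/-- Each pair `f i, x` brings the counter of Maj back to `0`, and `f i` is buffered twice. -/
lemma notMem_majRun_flatMap_pair {f : ℕ → ℕ} {T : List ℕ} (hT : x ∉ T) :
    ∀ (L : List ℕ) (s : ℕ × ℕ), s.2 = 0 → (∀ i ∈ L, f i ≠ x) →
      x ∉ majRun s ((L.flatMap fun i => [f i, x]) ++ T)
  | [], s, hs, _ => fun h => hT (mem_of_mem_majRun hs (by simpa using h))
  | i :: L, s, hs, hL => by
    have hfi : f i ≠ x := hL i mem_cons_self
    have h1 : majStep s (f i) = (f i, 1) := if_pos hs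
    have h2 : majStep (f i, 1) x = (f i, 0) := by simp [majStep, hfi.symm]
    simp only [flatMap_cons, cons_append, nil_append]
    rw [majRun_cons, h1, majRun_cons, h2]
    simp only [mem_cons, not_or]
    exact ⟨hfi.symm, hfi.symm,
      notMem_majRun_flatMap_pair hT L _ rfl fun j hj => hL j (mem_cons_of_mem _ hj)⟩

end Majority

lemma Wseq'_eq (n : ℕ) : Wseq' n = range' 1 ((n + 1) / 2) ++ replicate (n / 2) 0 := by
  rw [Wseq', range'_eq_map_range]
  exact congrArg (· ++ _) (map_congr_left fun i _ => Nat.add_comm i 1)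

lemma length_Wseq' (n : ℕ) : (Wseq' n).length = n := by
  rw [Wseq'_eq, length_append, length_range', length_replicate]
  omega

lemma count_Wseq'_zero (n : ℕ) : (Wseq' n).count 0 = n / 2 := by
  have h0 : 0 ∉ range' 1 ((n + 1) / 2) := by simp [mem_range'_1]
  rw [Wseq'_eq, count_append, count_eq_zero_of_not_mem h0, count_replicate_self, zero_add]

lemma count_Wseq'_of_mem {n v : ℕ} (hv : v ≠ 0) (hmem : v ∈ Wseq' n) : (Wseq' n).count v = 1 := by
  rw [Wseq'_eq] at hmem ⊢
  have hrep : v ∉ replicate (n / 2) 0 := fun h => hv (eq_of_mem_replicate h)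
  have hrange : v ∈ range' 1 ((n + 1) / 2) := (mem_append.1 hmem).resolve_right hrep
  rw [count_append, count_eq_one_of_mem nodup_range' hrange, count_eq_zero_of_not_mem hrep]

lemma count_Wseq'_le_count_zero {n : ℕ} (hn : 2 ≤ n) (v : ℕ) :
    (Wseq' n).count v ≤ (Wseq' n).count 0 := by
  rw [count_Wseq'_zero]
  by_cases hv : v = 0
  · rw [hv, count_Wseq'_zero]
  by_cases hmem : v ∈ Wseq' n
  · rw [count_Wseq'_of_mem hv hmem]
    omega
  · rw [count_eq_zero_of_not_mem hmem]
    omega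

lemma perm_flatMap_pair (f : ℕ → ℕ) (x : ℕ) :
    ∀ L : List ℕ, (L.flatMap fun i => [f i, x]).Perm (L.map f ++ replicate L.length x)
  | [] => Perm.refl []
  | i :: L => by
    rw [flatMap_cons, map_cons, length_cons, replicate_succ]
    simpa [← append_assoc] using ((perm_flatMap_pair f x L).cons x).trans perm_middle.symm

lemma Wseq'_perm_Wseq (n : ℕ) : (Wseq' n).Perm (Wseq n) := by
  refine Perm.trans ?_ ((perm_flatMap_pair _ 0 _).append_right _).symm
  rw [Wseq', length_range]
  rcases Nat.even_or_odd' n with ⟨k, rfl | rfl⟩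
  · have hk : (2 * k + 1) / 2 = k := by omega
    simp [hk]
  · have hk : (2 * k + 1 + 1) / 2 = k + 1 := by omega
    have hk' : (2 * k + 1) / 2 = k := by omega
    have hodd : (2 * k + 1) % 2 = 1 := by omega
    simp only [hk, hk', hodd, if_true, range_succ, map_append]
    rw [append_assoc, append_assoc]
    exact perm_append_comm.append_left _

lemma length_Wseq (n : ℕ) : (Wseq n).length = n :=
  (Wseq'_perm_Wseq n).length_eq ▸ length_Wseq' n

lemma eagP_Wseq'_eq_naiP (n : ℕ) : eagP (Wseq' n) = naiP (Wseq' n) := by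
  have hnodup : (range' 1 ((n + 1) / 2) ++ [0]).Nodup :=
    nodup_append.2 ⟨nodup_range', nodup_singleton 0, fun a ha b hb => by
      rw [mem_range'_1] at ha
      rw [mem_singleton] at hb
      omega⟩
  rw [eagP, naiP, Wseq'_eq, eagRun_append_replicate _ hnodup]

lemma naiP_le_eagP_of_perm_Wseq' {n : ℕ} (hn : 2 ≤ n) {J : List ℕ} (hJ : J.Perm (Wseq' n)) :
    naiP J ≤ eagP J := by
  refine naiP_le_eagP fun x hx z _ => ?_
  have hx2 : 2 ≤ J.count x := by simpa using hx.sublist.count_le x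
  have hx0 : x = 0 := by
    by_contra hx0
    have hxmem := hJ.subset (hx.subset mem_cons_self)
    rw [hJ.count_eq, count_Wseq'_of_mem hx0 hxmem] at hx2
    omega
  rw [hx0, hJ.count_eq, hJ.count_eq]
  exact count_Wseq'_le_count_zero hn z

lemma eagP_Wseq'_eq_worstP {n : ℕ} (hn : 2 ≤ n) : eagP (Wseq' n) = worstP eagP (Wseq n) := by
  refine (worstP_eq_of_forall_le eagP_nonneg (Wseq'_perm_Wseq n) fun J hJ => ?_).symm
  have hJ' : J.Perm (Wseq' n) := hJ.trans (Wseq'_perm_Wseq n).symm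
  rw [eagP_Wseq'_eq_naiP, ← naiP_perm hJ']
  exact naiP_le_eagP_of_perm_Wseq' hn hJ'

lemma naiP_Wseq' (n : ℕ) :
    naiP (Wseq' n) = (((n + 1) / 2 : ℕ) + (n / 2 : ℕ) * (n / 2 : ℕ) : ℝ) / n := by
  have hitems : ∀ v ∈ range' 1 ((n + 1) / 2), freq (Wseq' n) v = 1 / n := fun v hv => by
    have hv0 : v ≠ 0 := by rw [mem_range'_1] at hv; omega
    rw [freq, count_Wseq'_of_mem hv0 (by rw [Wseq'_eq]; exact mem_append_left _ hv),
      length_Wseq', Nat.cast_one]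
  have hzeros : ∀ v ∈ replicate (n / 2) 0, freq (Wseq' n) v = (n / 2 : ℕ) / n := fun v hv => by
    rw [eq_of_mem_replicate hv, freq, count_Wseq'_zero, length_Wseq']
  rw [naiP]
  nth_rewrite 2 [Wseq'_eq]
  rw [profit_append, profit_eq_length_mul hitems, profit_eq_length_mul hzeros, length_range',
    length_replicate]
  ring

lemma div_four_le_naiP_Wseq' {n : ℕ} (hn : 1 ≤ n) : (n : ℝ) / 4 ≤ naiP (Wseq' n) := by
  have hsq : n * n ≤ ((n + 1) / 2 + n / 2 * (n / 2)) * 4 := by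
    rcases Nat.even_or_odd' n with ⟨k, rfl | rfl⟩
    · rw [show (2 * k + 1) / 2 = k by omega, show 2 * k / 2 = k by omega]
      nlinarith
    · rw [show (2 * k + 1 + 1) / 2 = k + 1 by omega, show (2 * k + 1) / 2 = k by omega]
      nlinarith
  have hnR : (0 : ℝ) < n := by exact_mod_cast hn
  rw [naiP_Wseq', div_le_div_iff₀ (by norm_num) hnR]
  exact_mod_cast hsq

lemma zero_notMem_majBuffers_Wseq (n : ℕ) : 0 ∉ majBuffers (Wseq n) := by
  have hT : 0 ∉ (if n % 2 = 1 then [n / 2 + 1] else []) := by split <;> simp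
  exact notMem_majRun_flatMap_pair hT _ (0, 0) rfl fun i _ => Nat.succ_ne_zero i

lemma majP_Wseq {n : ℕ} (hn : 1 ≤ n) : majP (Wseq n) = 1 := by
  have hfreq : ∀ v ∈ majBuffers (Wseq n), freq (Wseq n) v = 1 / n := fun v hv => by
    have hv0 : v ≠ 0 := fun h => zero_notMem_majBuffers_Wseq n (h ▸ hv)
    have hmem : v ∈ Wseq' n := (Wseq'_perm_Wseq n).mem_iff.2 (mem_of_mem_majBuffers hv)
    rw [freq, ← (Wseq'_perm_Wseq n).count_eq, count_Wseq'_of_mem hv0 hmem, length_Wseq,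
      Nat.cast_one]
  rw [majP, profit_eq_length_mul hfreq, length_majBuffers, length_Wseq]
  field_simp

section Eseq

variable {n a b : ℕ}

lemma length_Eseq (hn : 2 ≤ n) : (Eseq n a b).length = n := by
  rw [Eseq, length_cons, length_cons, length_replicate]
  omega

lemma count_Eseq_left (hab : a ≠ b) : (Eseq n a b).count a = 2 := by
  rw [Eseq, count_cons_self, count_cons_self,
    count_eq_zero_of_not_mem fun h => hab (eq_of_mem_replicate h)]

lemma count_Eseq_right (hab : a ≠ b) : (Eseq n a b).count b = n - 2 := by
  rw [Eseq, count_cons_of_ne hab, count_cons_of_ne hab, count_replicate_self]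

lemma eq_or_eq_of_mem_Eseq {v : ℕ} (hv : v ∈ Eseq n a b) : v = a ∨ v = b := by
  rw [Eseq, mem_cons, mem_cons] at hv
  rcases hv with h | h | h
  · exact .inl h
  · exact .inl h
  · exact .inr (eq_of_mem_replicate h)

lemma eagP_Eseq (hab : a ≠ b) (hn : 2 ≤ n) : eagP (Eseq n a b) = 2 := by
  have hrun : eagRun (Eseq n a b) = replicate n a := by
    rw [Eseq, eagRun_cons_self, length_replicate, Nat.sub_add_cancel hn]
  have hfreq : ∀ v ∈ replicate n a, freq (Eseq n a b) v = 2 / n := fun v hv => by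
    rw [eq_of_mem_replicate hv, freq, count_Eseq_left hab, length_Eseq hn, Nat.cast_ofNat]
  have hnR : (n : ℝ) ≠ 0 := by positivity
  rw [eagP, hrun, profit_eq_length_mul hfreq, length_replicate]
  field_simp

lemma le_majP_of_perm_Eseq (hab : a ≠ b) (hn : 4 ≤ n) {J : List ℕ} (hJ : J.Perm (Eseq n a b)) :
    (n : ℝ) - 6 + 16 / n ≤ majP J := by
  have hlen : J.length = n := hJ.length_eq.trans (length_Eseq (by omega))
  have hfreq : ∀ v ∈ majBuffers J,
      freq J v = if v = a then 2 / (n : ℝ) else ((n : ℝ) - 2) / n := fun v hv => by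
    rw [freq, hlen, hJ.count_eq]
    rcases eq_or_eq_of_mem_Eseq (hJ.subset (mem_of_mem_majBuffers hv)) with rfl | rfl
    · rw [if_pos rfl, count_Eseq_left hab, Nat.cast_ofNat]
    · rw [if_neg (Ne.symm hab), count_Eseq_right hab, Nat.cast_sub (show 2 ≤ n by omega),
        Nat.cast_ofNat]
  have hc : ((majBuffers J).count a : ℝ) ≤ 4 := by
    have := count_majBuffers_le a J
    rw [hJ.count_eq, count_Eseq_left hab] at this
    exact_mod_cast this
  have hn4 : (4 : ℝ) ≤ n := by exact_mod_cast hn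
  rw [majP, profit, map_congr_left hfreq, sum_map_ite_eq, map_const', sum_replicate,
    length_majBuffers, hlen, nsmul_eq_mul, nsmul_eq_mul]
  have key : ((majBuffers J).count a : ℝ) * (2 / n - (n - 2) / n) + n * ((n - 2) / n)
      - (n - 6 + 16 / n) = (4 - (majBuffers J).count a) * (n - 4) / n := by
    field_simp
    ring
  have hpos : 0 ≤ (4 - ((majBuffers J).count a : ℝ)) * (n - 4) / n := by
    apply div_nonneg (mul_nonneg _ _) <;> linarith
  linarith

end Eseq

/-- Maj and Eag are incomparable under relative worst order
analysis: Maj_W(E_n) ≥ (n/2 − 3 + 8/n)·Eag_W(E_n), while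
Eag_W(W_n) ≥ (n/4)·Maj_W(W_n), where W'_n (⌈n/2⌉ distinct items followed by
⌊n/2⌋ copies of a_0) is a worst ordering of the content of W_n for Eag. -/
theorem stmt19 (n a b : ℕ) (hab : a ≠ b) (hn : 4 ≤ n) :
    ((n : ℝ) / 2 - 3 + 8 / n) * worstP eagP (Eseq n a b) ≤ worstP majP (Eseq n a b) ∧
    (Wseq' n).Perm (Wseq n) ∧
    eagP (Wseq' n) = worstP eagP (Wseq n) ∧
    ((n : ℝ) / 4) * worstP majP (Wseq n) ≤ worstP eagP (Wseq n) := by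
  have hEag : worstP eagP (Eseq n a b) ≤ 2 :=
    eagP_Eseq hab (show 2 ≤ n by omega) ▸ worstP_le eagP_nonneg (Perm.refl _)
  have hMaj : (n : ℝ) - 6 + 16 / n ≤ worstP majP (Eseq n a b) :=
    le_worstP fun _ hJ => le_majP_of_perm_Eseq hab hn hJ
  have hMajW : worstP majP (Wseq n) ≤ 1 :=
    majP_Wseq (show 1 ≤ n by omega) ▸ worstP_le majP_nonneg (Perm.refl _)
  have hEagW : eagP (Wseq' n) = worstP eagP (Wseq n) := eagP_Wseq'_eq_worstP (by omega)
  refine ⟨?_, Wseq'_perm_Wseq n, hEagW, ?_⟩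
  · have hcoef : 0 ≤ (n : ℝ) / 2 - 3 + 8 / n := by
      rw [show (n : ℝ) / 2 - 3 + 8 / n = ((n - 3) ^ 2 + 7) / (2 * n) by field_simp; ring]
      positivity
    calc ((n : ℝ) / 2 - 3 + 8 / n) * worstP eagP (Eseq n a b)
        ≤ ((n : ℝ) / 2 - 3 + 8 / n) * 2 := mul_le_mul_of_nonneg_left hEag hcoef
      _ = n - 6 + 16 / n := by ring
      _ ≤ worstP majP (Eseq n a b) := hMaj
  · calc ((n : ℝ) / 4) * worstP majP (Wseq n)
        ≤ (n : ℝ) / 4 := mul_le_of_le_one_right (by positivity) hMajW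
      _ ≤ eagP (Wseq' n) := eagP_Wseq'_eq_naiP n ▸ div_four_le_naiP_Wseq' (by omega)
      _ = worstP eagP (Wseq n) := hEagW
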